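/- Let G be a weighted graph on a finite vertex set, let S and T be finite sets of vertices, and let S', S'' ⊆ S and T', T'' ⊆ T be subsets with |S''||T''| ≤ |S'||T'| and with S', T' nonempty. Then irreg_G(S,T) ≥ (1/2)·|e_G(S'',T'') − (|S''||T''|/(|S'||T'|))·e_G(S',T')|. -/
import Mathlib


open Finset

/-- The sum of weights over ordered pairs in `A × B` in a weighted graph `w`. -/
def weightSum {V : Type*} (w : V → V → ℝ) (A B : Finset V) : ℝ :=
  ∑ x ∈ A, ∑ y ∈ B, w x y

/-- The weighted edge density between `X` and `Y`. -/
noncomputable def wDensity {V : Type*} (w : V → V → ℝ) (X Y : Finset V) : ℝ :=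
  weightSum w X Y / ((X.card : ℝ) * (Y.card : ℝ))

/-- The irregularity of the pair `X, Y` in a weighted graph `w`. -/
noncomputable def wIrregPair {V : Type*} [DecidableEq V] (w : V → V → ℝ)
    (X Y : Finset V) : ℝ :=
  (X.powerset ×ˢ Y.powerset).sup'
    ⟨(∅, ∅), by simp⟩
    (fun UW => |weightSum w UW.1 UW.2 - (UW.1.card : ℝ) * (UW.2.card : ℝ) * wDensity w X Y|)

/-- The irregularity of a vertex partition in a weighted graph `w`. -/
noncomputable def wIrregPartition {V : Type*} [DecidableEq V] (w : V → V → ℝ)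
    (P : Finset (Finset V)) : ℝ :=
  ∑ X ∈ P, ∑ Y ∈ P, wIrregPair w X Y

/-- `P` is a partition of the vertex set into nonempty parts. -/
def IsPartition {V : Type*} [Fintype V] [DecidableEq V] (P : Finset (Finset V)) : Prop :=
  (∀ p ∈ P, p.Nonempty) ∧ (∀ p ∈ P, ∀ q ∈ P, p ≠ q → Disjoint p q) ∧
    P.biUnion id = Finset.univ


lemma le_wIrregPair {V : Type*} [DecidableEq V] (w : V → V → ℝ) (S T U W : Finset V)
    (hU : U ⊆ S) (hW : W ⊆ T) :
    |weightSum w U W - (U.card : ℝ) * (W.card : ℝ) * wDensity w S T| ≤ wIrregPair w S T :=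
  Finset.le_sup' (f := fun UW : Finset V × Finset V =>
      |weightSum w UW.1 UW.2 - (UW.1.card : ℝ) * (UW.2.card : ℝ) * wDensity w S T|)
    (b := (U, W)) (by simp [Finset.mem_product, hU, hW])

/-- The irregularity of a pair `S, T` is at least half the discrepancy between the edge
count of a sub-pair `S'', T''` and its prediction from another sub-pair `S', T'`. -/
theorem irregPair_ge_half_discrepancy {V : Type*} [Fintype V] [DecidableEq V]
    (w : V → V → ℝ) (hsymm : ∀ x y, w x y = w y x) (h0 : ∀ x y, 0 ≤ w x y)
    (h1 : ∀ x y, w x y ≤ 1)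
    (S T S' S'' T' T'' : Finset V) (hS' : S' ⊆ S) (hS'' : S'' ⊆ S)
    (hT' : T' ⊆ T) (hT'' : T'' ⊆ T) (hS'ne : S'.Nonempty) (hT'ne : T'.Nonempty)
    (hcard : S''.card * T''.card ≤ S'.card * T'.card) :
    (1 / 2) * |weightSum w S'' T'' -
        ((S''.card : ℝ) * (T''.card : ℝ)) / ((S'.card : ℝ) * (T'.card : ℝ)) *
          weightSum w S' T'| ≤ wIrregPair w S T := by
  have key := le_wIrregPair w S T
  have h'' := key S'' T'' hS'' hT''
  have h' := key S' T' hS' hT'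
  set d := wDensity w S T
  set c : ℝ := ((S''.card : ℝ) * (T''.card : ℝ)) / ((S'.card : ℝ) * (T'.card : ℝ)) with hc
  have hs'pos : (0:ℝ) < (S'.card : ℝ) * (T'.card : ℝ) := by
    have := hS'ne.card_pos; have := hT'ne.card_pos; positivity
  have hc0 : 0 ≤ c := by positivity
  have hc1 : c ≤ 1 := by
    rw [hc, div_le_one hs'pos]
    exact_mod_cast (by exact_mod_cast hcard : ((S''.card * T''.card : ℕ) : ℝ) ≤ (S'.card * T'.card : ℕ))
  have hid : weightSum w S'' T'' - c * weightSum w S' T' =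
      (weightSum w S'' T'' - (S''.card : ℝ) * (T''.card : ℝ) * d)
      - c * (weightSum w S' T' - (S'.card : ℝ) * (T'.card : ℝ) * d) := by
    have : c * ((S'.card : ℝ) * (T'.card : ℝ)) = (S''.card : ℝ) * (T''.card : ℝ) := by
      rw [hc, div_mul_cancel₀]; exact ne_of_gt hs'pos
    linear_combination -d * this
  rw [hid]
  have habs : |(weightSum w S'' T'' - (S''.card : ℝ) * (T''.card : ℝ) * d)
      - c * (weightSum w S' T' - (S'.card : ℝ) * (T'.card : ℝ) * d)| ≤
      wIrregPair w S T + c * wIrregPair w S T := by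
    calc _ ≤ |weightSum w S'' T'' - (S''.card : ℝ) * (T''.card : ℝ) * d|
          + |c * (weightSum w S' T' - (S'.card : ℝ) * (T'.card : ℝ) * d)| := abs_sub _ _
      _ ≤ wIrregPair w S T + c * wIrregPair w S T := by
          rw [abs_mul, abs_of_nonneg hc0]
          exact add_le_add h'' (mul_le_mul_of_nonneg_left h' hc0)
  have hirr0 : 0 ≤ wIrregPair w S T := le_trans (abs_nonneg _) h'
  nlinarith [habs, mul_le_of_le_one_left hirr0 hc1]
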